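/- Every derivation of W(g,1)_+ (with g injective) is the sum of an inner derivation ad_w (for some w ∈ W(g,1)_+) and a scalar derivation. -/

import Mathlib

/-!
Write `h = E (0, 0)`. Since `ad h` is surjective, subtracting an inner derivation makes `D h = 0`,
and then `D` commutes with `ad h`. On the block `{E (b, j)}_j` the operator `ad h` is `g b` plus a
lowering operator, so by injectivity of `g` its `g b`-eigenspace is `F • E (b, 0)`. Hence
`D E(b,0) = α(b) E(b,0)` and `D E(b,1) = α(b) E(b,1) + β(b) E(b,0)`. Applying `D` to
`⁅E(a,0), E(b,1)⁆` shows that `α` is additive and `β` is a constant `μ`. The vectors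
`E (b, 0)`, `E (b, 1)` generate `W` as a Lie algebra, so `D` is the scalar derivation with
weights `α(a) - μ g(a)` plus `μ • ad h`.
-/

open Filter

theorem Nat.forall_of_eventually_of_succ_imp {P : ℕ → Prop} (hev : ∀ᶠ k in atTop, P k)
    (hstep : ∀ k, P (k + 1) → P k) (k : ℕ) : P k := by
  obtain ⟨N, hN⟩ := hev.exists_forall_of_atTop
  exact Nat.decreasingInduction (motive := fun m _ => P m) (fun m _ => hstep m)
    (hN _ (le_max_left N k)) (le_max_right N k)

theorem Finsupp.eventually_apply_mk_eq_zero {α M : Type*} [Zero M] (f : α × ℕ →₀ M)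
    (a : α) : ∀ᶠ k in atTop, f (a, k) = 0 := by
  rw [← Nat.cofinite_eq_atTop]
  have hfin : ((fun k => (a, k)) ⁻¹' (f.support : Set (α × ℕ))).Finite :=
    f.support.finite_toSet.preimage fun _ _ _ _ h => (Prod.mk.inj h).2
  filter_upwards [hfin.eventually_cofinite_notMem] with k hk
  simpa using hk

theorem Module.Basis.eq_and_eq_of_smul_add_smul_eq {ι R M : Type*} [Semiring R]
    [AddCommMonoid M] [Module R M] (E : Module.Basis ι R M) {p q : ι} (hpq : p ≠ q)
    {s t s' t' : R} (h : s • E p + t • E q = s' • E p + t' • E q) : s = s' ∧ t = t' := by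
  have hr := congrArg E.repr h
  simp only [map_add, map_smul, E.repr_self] at hr
  constructor
  · simpa [hpq] using DFunLike.congr_fun hr p
  · simpa [hpq.symm] using DFunLike.congr_fun hr q

namespace LieDerivation

variable {ι R L M : Type*} [CommRing R] [LieRing L] [LieAlgebra R L]
  [AddCommGroup M] [Module R M] [LieRingModule L M] [LieModule R L M]

def ofBasis (b : Module.Basis ι R L) (f : L →ₗ[R] M)
    (h : ∀ i j, f ⁅b i, b j⁆ = ⁅b i, f (b j)⁆ - ⁅b j, f (b i)⁆) :
    LieDerivation R L M where
  __ := f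
  leibniz' x y := by
    have key : (LieAlgebra.ad R L : L →ₗ[R] Module.End R L).compr₂ f =
        (LieModule.toEnd R L M : L →ₗ[R] Module.End R M).compl₂ f -
          (LieModule.toEnd R L M : L →ₗ[R] Module.End R M).flip ∘ₗ f :=
      LinearMap.ext_basis b b fun i j => by simpa using h i j
    simpa using LinearMap.congr_fun₂ key x y

@[simp] lemma ofBasis_apply (b : Module.Basis ι R L) (f : L →ₗ[R] M) (h) (x : L) :
    ofBasis b f h x = f x := rfl

end LieDerivation

section

variable {F W : Type*} [Field F] [LieRing W] [LieAlgebra F W]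

/-- `E (a, i)` is the basis vector `⟨a, i⟩` of `W(g,1)_+`. For `i = j = 0` the truncated index
`i + j - 1` is harmless, its coefficient `j - i` being zero. -/
def IsWittBasis (g : ℤ →+ F) (E : Module.Basis (ℤ × ℕ) F W) : Prop :=
  ∀ (a : ℤ) (i : ℕ) (b : ℤ) (j : ℕ), ⁅E (a, i), E (b, j)⁆ =
    (g b - g a) • E (a + b, i + j) + (((j : ℤ) - (i : ℤ)) : F) • E (a + b, i + j - 1)

namespace IsWittBasis

variable {g : ℤ →+ F} {E : Module.Basis (ℤ × ℕ) F W}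

theorem lie_basis_zero_zero (hE : IsWittBasis g E) (b : ℤ) (j : ℕ) :
    ⁅E (0, 0), E (b, j)⁆ = g b • E (b, j) + (j : F) • E (b, j - 1) := by
  simpa using hE 0 0 b j

theorem lie_basis_zero_zero_at_zero (hE : IsWittBasis g E) (b : ℤ) :
    ⁅E (0, 0), E (b, 0)⁆ = g b • E (b, 0) := by
  simpa using hE.lie_basis_zero_zero b 0

theorem lie_basis_zero_zero_at_one (hE : IsWittBasis g E) (b : ℤ) :
    ⁅E (0, 0), E (b, 1)⁆ = g b • E (b, 1) + E (b, 0) := by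
  simpa using hE.lie_basis_zero_zero b 1

theorem repr_lie_basis_zero_zero (hE : IsWittBasis g E) (y : W) (b : ℤ) (k : ℕ) :
    E.repr ⁅E (0, 0), y⁆ (b, k) =
      g b * E.repr y (b, k) + (k + 1 : F) * E.repr y (b, k + 1) := by
  have key : Finsupp.lapply (b, k) ∘ₗ E.repr.toLinearMap ∘ₗ LieAlgebra.ad F W (E (0, 0)) =
      g b • (Finsupp.lapply (b, k) ∘ₗ E.repr.toLinearMap) +
        (k + 1 : F) • (Finsupp.lapply (b, k + 1) ∘ₗ E.repr.toLinearMap) := by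
    refine E.ext fun ⟨b', j⟩ => ?_
    rcases j with _ | j
    · by_cases hb : b' = b <;> simp [hE.lie_basis_zero_zero, Finsupp.single_apply, hb]
    · by_cases hb : b' = b <;> by_cases hj : j = k <;>
        simp [hE.lie_basis_zero_zero, Finsupp.single_apply, hb, hj]
  simpa using LinearMap.congr_fun key y

theorem eq_smul_basis_of_lie_eq_smul [CharZero F] (hE : IsWittBasis g E)
    (hg : Function.Injective g) {b : ℤ} {y : W} (hy : ⁅E (0, 0), y⁆ = g b • y) :
    y = E.repr y (b, 0) • E (b, 0) := by
  have hrec : ∀ b' k,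
      (g b' - g b) * E.repr y (b', k) = -((k + 1 : F) * E.repr y (b', k + 1)) := by
    intro b' k
    have := hE.repr_lie_basis_zero_zero y b' k
    rw [hy, map_smul, Finsupp.smul_apply, smul_eq_mul] at this
    linear_combination -this
  have hoff : ∀ b' ≠ b, ∀ k, E.repr y (b', k) = 0 := by
    intro b' hb'
    have hne : g b' - g b ≠ 0 := sub_ne_zero.2 (hg.ne hb')
    refine Nat.forall_of_eventually_of_succ_imp ((E.repr y).eventually_apply_mk_eq_zero b') ?_
    intro k hk
    simpa [hk, hne] using hrec b' k
  have hdiag : ∀ k, E.repr y (b, k + 1) = 0 := by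
    intro k
    have := hrec b k
    rw [sub_self, zero_mul, zero_eq_neg] at this
    exact (mul_eq_zero.1 this).resolve_left (by exact_mod_cast k.succ_ne_zero)
  refine E.ext_elem fun ⟨b', k⟩ => ?_
  rw [map_smul, E.repr_self, Finsupp.smul_apply, Finsupp.single_apply, smul_eq_mul]
  rcases eq_or_ne b' b with rfl | hb'
  · rcases k with _ | k
    · simp
    · simp [hdiag k]
  · simp [hoff b' hb', hb'.symm]

theorem ad_basis_zero_zero_surjective [CharZero F] (hE : IsWittBasis g E)
    (hg : Function.Injective g) : Function.Surjective (LieAlgebra.ad F W (E (0, 0))) := by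
  set R := LinearMap.range (LieAlgebra.ad F W (E (0, 0)) : W →ₗ[F] W)
  have hmem : ∀ p, E p ∈ R := by
    rintro ⟨b, j⟩
    rcases eq_or_ne b 0 with rfl | hb
    · refine ⟨(j + 1 : F)⁻¹ • E (0, j + 1), ?_⟩
      have hj : (j + 1 : F) ≠ 0 := by exact_mod_cast j.succ_ne_zero
      simp [hE.lie_basis_zero_zero, smul_smul, hj]
    · have hgb : g b ≠ 0 := by simpa using hg.ne hb
      induction j with
      | zero =>
        refine ⟨(g b)⁻¹ • E (b, 0), ?_⟩
        simp [hE.lie_basis_zero_zero_at_zero, smul_smul, hgb]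
      | succ j ih =>
        have hbasis : E (b, j + 1) =
            (g b)⁻¹ • (⁅E (0, 0), E (b, j + 1)⁆ - (j + 1 : F) • E (b, j)) := by
          simp [hE.lie_basis_zero_zero, smul_smul, hgb]
        rw [hbasis]
        exact R.smul_mem _ (R.sub_mem ⟨E (b, j + 1), rfl⟩ (R.smul_mem _ ih))
  have hR : R = ⊤ :=
    eq_top_iff.2 (E.span_eq ▸ Submodule.span_le.2 (Set.range_subset_iff.2 hmem))
  exact LinearMap.range_eq_top.1 hR

theorem lieSpan_basis_snd_le_one_eq_top (hE : IsWittBasis g E) (hg : Function.Injective g) :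
    LieSubalgebra.lieSpan F W (E '' {p | p.2 ≤ 1}) = ⊤ := by
  set K := LieSubalgebra.lieSpan F W (E '' {p | p.2 ≤ 1})
  have hmem : ∀ j b, E (b, j) ∈ K := by
    intro j
    induction j using Nat.strong_induction_on with
    | _ j ih =>
      intro b
      match j, ih with
      | 0, _ | 1, _ => exact LieSubalgebra.subset_lieSpan ⟨_, by simp, rfl⟩
      | j + 2, ih =>
        obtain ⟨a, ha⟩ : ∃ a : ℤ, b - a ≠ a :=
          ⟨if b = 0 then 1 else 0, by split_ifs <;> omega⟩
        have hc : g (b - a) - g a ≠ 0 := sub_ne_zero.2 (hg.ne ha)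
        have hlie : ⁅E (a, 1), E (b - a, j + 1)⁆ =
            (g (b - a) - g a) • E (b, j + 2) + (j : F) • E (b, j + 1) := by
          have := hE a 1 (b - a) (j + 1)
          rw [add_sub_cancel, show 1 + (j + 1) = j + 2 by omega] at this
          simpa using this
        have hbasis : E (b, j + 2) =
            (g (b - a) - g a)⁻¹ •
              (⁅E (a, 1), E (b - a, j + 1)⁆ - (j : F) • E (b, j + 1)) := by
          rw [hlie, add_sub_cancel_right, smul_smul, inv_mul_cancel₀ hc, one_smul]
        rw [hbasis]
        have hlie_mem := K.lie_mem (ih 1 (by omega) a) (ih (j + 1) (by omega) (b - a))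
        exact K.smul_mem _ (K.sub_mem hlie_mem (K.smul_mem _ (ih (j + 1) (by omega) b)))
  have htop : (⊤ : Submodule F W) ≤ K.toSubmodule :=
    E.span_eq ▸ Submodule.span_le.2 (Set.range_subset_iff.2 fun p => hmem p.2 p.1)
  exact eq_top_iff.2 fun x _ => htop Submodule.mem_top

noncomputable def scalarDerivation (hE : IsWittBasis g E) (φ : ℤ →+ F) :
    LieDerivation F W W :=
  LieDerivation.ofBasis E (E.constr F fun p => φ p.1 • E p) fun ⟨a, i⟩ ⟨b, j⟩ => by
    rw [E.constr_basis, E.constr_basis, lie_smul, lie_smul, ← lie_skew (E (b, j)), hE a i b j]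
    simp only [map_add, map_smul, E.constr_basis]
    module

@[simp] theorem scalarDerivation_apply_basis (hE : IsWittBasis g E) (φ : ℤ →+ F)
    (p : ℤ × ℕ) : hE.scalarDerivation φ (E p) = φ p.1 • E p := by
  simp [scalarDerivation]

theorem exists_apply_basis_of_apply_basis_zero_zero_eq_zero [CharZero F]
    (hE : IsWittBasis g E) (hg : Function.Injective g) {D : LieDerivation F W W}
    (hD : D (E (0, 0)) = 0) (b : ℤ) :
    ∃ α β : F,
      D (E (b, 0)) = α • E (b, 0) ∧ D (E (b, 1)) = α • E (b, 1) + β • E (b, 0) := by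
  have hcomm : ∀ y, ⁅E (0, 0), D y⁆ = D ⁅E (0, 0), y⁆ := fun y => by
    rw [D.apply_lie_eq_add, hD, zero_lie, add_zero]
  have h0 := hE.eq_smul_basis_of_lie_eq_smul hg (y := D (E (b, 0))) <| by
    rw [hcomm, hE.lie_basis_zero_zero_at_zero, map_smul]
  set α := E.repr (D (E (b, 0))) (b, 0)
  have h1 := hE.eq_smul_basis_of_lie_eq_smul hg (y := D (E (b, 1)) - α • E (b, 1)) <| by
    rw [lie_sub, lie_smul, hcomm, hE.lie_basis_zero_zero_at_one, map_add, map_smul, h0]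
    module
  exact ⟨α, _, h0, sub_eq_iff_eq_add'.1 h1⟩

theorem lieDerivation_coeff_relations (hE : IsWittBasis g E) {D : LieDerivation F W W}
    {α β : ℤ → F} (hD : ∀ b, D (E (b, 0)) = α b • E (b, 0) ∧
      D (E (b, 1)) = α b • E (b, 1) + β b • E (b, 0)) (a b : ℤ) :
    (g b - g a) * α (a + b) = (g b - g a) * (α a + α b) ∧
      (g b - g a) * β (a + b) + α (a + b) = α a + α b + (g b - g a) * β b := by
  have hlie0 : ⁅E (a, 0), E (b, 0)⁆ = (g b - g a) • E (a + b, 0) := by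
    simpa using hE a 0 b 0
  have hlie1 : ⁅E (a, 0), E (b, 1)⁆ = (g b - g a) • E (a + b, 1) + E (a + b, 0) := by
    simpa using hE a 0 b 1
  refine E.eq_and_eq_of_smul_add_smul_eq (p := (a + b, 1)) (q := (a + b, 0)) (by simp) ?_
  calc _ = D ⁅E (a, 0), E (b, 1)⁆ := by
        rw [hlie1, map_add, map_smul, (hD _).1, (hD _).2]
        module
    _ = _ := by
        rw [D.apply_lie_eq_add, (hD a).1, (hD b).2, lie_add, lie_smul, lie_smul, smul_lie, hlie0,
          hlie1]
        module

theorem exists_eq_scalarDerivation_add_smul_inner [CharZero F] (hE : IsWittBasis g E)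
    (hg : Function.Injective g) {D : LieDerivation F W W} (hD : D (E (0, 0)) = 0) :
    ∃ (φ : ℤ →+ F) (c : F),
      D = hE.scalarDerivation φ + c • LieDerivation.inner F W W (E (0, 0)) := by
  choose α β hαβ using hE.exists_apply_basis_of_apply_basis_zero_zero_eq_zero hg hD
  have hrel := hE.lieDerivation_coeff_relations hαβ
  have hadd : ∀ a b, α (a + b) = α a + α b := by
    intro a b
    rcases eq_or_ne a b with rfl | hab
    · simpa using (hrel a a).2
    · exact mul_left_cancel₀ (sub_ne_zero.2 (hg.ne hab.symm)) (hrel a b).1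
  have hβ : ∀ b, β b = β 0 := by
    intro b
    rcases eq_or_ne b 0 with rfl | hb
    · rfl
    · have hα0 : α 0 = 0 := by simpa using hadd 0 0
      have h := (hrel b 0).2
      simp only [add_zero, hα0] at h
      exact mul_left_cancel₀ (sub_ne_zero.2 (hg.ne hb.symm)) (by linear_combination h)
  -- `LieDerivation.inner F W W (E (0, 0))` is `-ad (E (0, 0))`
  refine ⟨AddMonoidHom.mk' α hadd - β 0 • g, -β 0,
    LieDerivation.ext_of_lieSpan_eq_top _ (hE.lieSpan_basis_snd_le_one_eq_top hg) ?_⟩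
  rintro _ ⟨⟨b, j⟩, hj : j ≤ 1, rfl⟩
  interval_cases j
  · simp [(hαβ b).1, ← lie_skew (E (b, 0)), hE.lie_basis_zero_zero_at_zero]
    module
  · simp [(hαβ b).2, hβ b, ← lie_skew (E (b, 1)), hE.lie_basis_zero_zero_at_one]
    module

theorem exists_eq_scalarDerivation_add_inner [CharZero F] (hE : IsWittBasis g E)
    (hg : Function.Injective g) (D : LieDerivation F W W) :
    ∃ (φ : ℤ →+ F) (w : W), D = hE.scalarDerivation φ + LieDerivation.inner F W W w := by
  obtain ⟨u, hu⟩ := hE.ad_basis_zero_zero_surjective hg (D (E (0, 0)))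
  obtain ⟨φ, c, hφc⟩ := hE.exists_eq_scalarDerivation_add_smul_inner hg
    (D := D - LieDerivation.inner F W W u) (by simp [← hu])
  refine ⟨φ, u + c • E (0, 0), ?_⟩
  rw [map_add, map_smul, add_comm (LieDerivation.inner F W W u), ← add_assoc, ← hφc,
    sub_add_cancel]

end IsWittBasis

end

theorem derivation_inner_plus_scalar (F : Type*) [Field F] [CharZero F] (g : ℤ →+ F)
    (hg : Function.Injective g)
    (W : Type*) [LieRing W] [LieAlgebra F W] (E : Module.Basis (ℤ × ℕ) F W)
    (hbr : ∀ (a : ℤ) (i : ℕ) (b : ℤ) (j : ℕ), ⁅E (a, i), E (b, j)⁆ =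
      (g b - g a) • E (a + b, i + j) + (((j : ℤ) - (i : ℤ)) : F) • E (a + b, i + j - 1))
    (D : LieDerivation F W W) :
    ∃ (w : W) (S : LieDerivation F W W),
      (∀ (a : ℤ) (i : ℕ), ∃ s : F, S (E (a, i)) = s • E (a, i)) ∧
      ∀ x : W, D x = ⁅w, x⁆ + S x := by
  have hE : IsWittBasis g E := hbr
  obtain ⟨φ, w, rfl⟩ := hE.exists_eq_scalarDerivation_add_inner hg D
  refine ⟨-w, hE.scalarDerivation φ,
    fun a i => ⟨φ a, hE.scalarDerivation_apply_basis φ (a, i)⟩, fun x => ?_⟩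
  rw [LieDerivation.add_apply, LieDerivation.inner_apply_apply, neg_lie, ← lie_skew, add_comm]
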